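/- Let n ≥ 1, let V be a C¹ vector field on ℝⁿ, and let Y be a C¹ vector field on ℝⁿ with compact support. Then ∫ Σᵢ,ⱼ (S(Y)ᵢⱼ + (1/2)(div Y)δᵢⱼ) Yᵢ Vⱼ dx = −(1/2) ∫ ( Σᵢ,ⱼ Yᵢ Yⱼ ∂ᵢVⱼ + (1/2)(div V)|Y|² ) dx. -/

import Mathlib

/-!
Put `F = ½⟨Y, V⟩ Y + ¼ |Y|² V` (`killingFlux`). Its divergence is the left-hand integrand plus
half of the right-hand integrand: expanding `Σᵢ ∂ᵢFᵢ` by the product rule reproduces every term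
except that `Σᵢⱼ ∂ⱼYᵢ Yᵢ Vⱼ` appears as `Σᵢⱼ ∂ᵢYⱼ Yⱼ Vᵢ`, which is the same sum with `i` and `j`
swapped. Since `F` is `C¹` with compact support, each `∫ ∂ᵢFᵢ` vanishes (integrate by parts
against the constant `1`), and the identity follows.
-/

open MeasureTheory Real

/-- The `i`-th partial derivative of a function on `ℝⁿ`. -/
noncomputable def pd (n : ℕ) (f : EuclideanSpace ℝ (Fin n) → ℝ)
    (i : Fin n) (x : EuclideanSpace ℝ (Fin n)) : ℝ :=
  fderiv ℝ f x (EuclideanSpace.single i 1)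

/-- The squared Euclidean norm of the gradient, `|∇f|² = Σᵢ (∂ᵢf)²`. -/
noncomputable def gradSq (n : ℕ) (f : EuclideanSpace ℝ (Fin n) → ℝ)
    (x : EuclideanSpace ℝ (Fin n)) : ℝ :=
  ∑ i, (pd n f i x) ^ 2

/-- The Euclidean Laplacian, `Δf = Σᵢ ∂ᵢ²f`. -/
noncomputable def lap (n : ℕ) (f : EuclideanSpace ℝ (Fin n) → ℝ)
    (x : EuclideanSpace ℝ (Fin n)) : ℝ :=
  ∑ i, pd n (pd n f i) i x

/-- The partial derivative `∂ᵢYⱼ` of a vector field `Y` on `ℝⁿ`. -/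
noncomputable def vpd (n : ℕ)
    (Y : EuclideanSpace ℝ (Fin n) → EuclideanSpace ℝ (Fin n))
    (i j : Fin n) (x : EuclideanSpace ℝ (Fin n)) : ℝ :=
  fderiv ℝ (fun y => Y y j) x (EuclideanSpace.single i 1)

/-- The symmetrized gradient `S(Y)ᵢⱼ = (∂ᵢYⱼ + ∂ⱼYᵢ)/2` of a vector field. -/
noncomputable def symGrad (n : ℕ)
    (Y : EuclideanSpace ℝ (Fin n) → EuclideanSpace ℝ (Fin n))
    (i j : Fin n) (x : EuclideanSpace ℝ (Fin n)) : ℝ :=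
  (vpd n Y i j x + vpd n Y j i x) / 2

/-- The divergence `div Y = Σᵢ ∂ᵢYᵢ` of a vector field on `ℝⁿ`. -/
noncomputable def diverg (n : ℕ)
    (Y : EuclideanSpace ℝ (Fin n) → EuclideanSpace ℝ (Fin n))
    (x : EuclideanSpace ℝ (Fin n)) : ℝ :=
  ∑ i, vpd n Y i i x

section IntegralFDeriv

variable {E : Type*} [NormedAddCommGroup E] [NormedSpace ℝ E]
  [MeasurableSpace E] [BorelSpace E] (μ : Measure E) [μ.IsAddHaarMeasure]
  {f : E → ℝ}

theorem ContDiff.integrable_fderiv_apply (hf : ContDiff ℝ 1 f) (hs : HasCompactSupport f)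
    (v : E) : Integrable (fun x ↦ fderiv ℝ f x v) μ :=
  ((hf.continuous_fderiv one_ne_zero).clm_apply continuous_const).integrable_of_hasCompactSupport
    (hs.fderiv_apply ℝ v)

theorem integral_fderiv_apply_eq_zero [FiniteDimensional ℝ E] (hf : ContDiff ℝ 1 f)
    (hs : HasCompactSupport f) (v : E) : ∫ x, fderiv ℝ f x v ∂μ = 0 := by
  simpa using integral_mul_fderiv_eq_neg_fderiv_mul_of_integrable (μ := μ)
    (f := fun _ ↦ (1 : ℝ)) (g := f) (v := v) (by simp)
    (by simpa using hf.integrable_fderiv_apply μ hs v)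
    (by simpa using hf.continuous.integrable_of_hasCompactSupport hs)
    (fun _ _ ↦ differentiableAt_const _) (fun x _ ↦ hf.differentiable one_ne_zero x)

end IntegralFDeriv

section PartialDerivatives

variable {n : ℕ} {x : EuclideanSpace ℝ (Fin n)} {f g : EuclideanSpace ℝ (Fin n) → ℝ}

theorem pd_mul (hf : DifferentiableAt ℝ f x) (hg : DifferentiableAt ℝ g x) (i : Fin n) :
    pd n (fun y ↦ f y * g y) i x = pd n f i x * g x + f x * pd n g i x := by
  simp only [pd, fderiv_fun_mul hf hg, add_apply, smul_apply, smul_eq_mul]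
  ring

theorem pd_add (hf : DifferentiableAt ℝ f x) (hg : DifferentiableAt ℝ g x) (i : Fin n) :
    pd n (fun y ↦ f y + g y) i x = pd n f i x + pd n g i x := by
  simp [pd, fderiv_fun_add hf hg]

theorem pd_const_mul (hf : DifferentiableAt ℝ f x) (c : ℝ) (i : Fin n) :
    pd n (fun y ↦ c * f y) i x = c * pd n f i x := by
  simp [pd, fderiv_const_mul hf]

theorem pd_pow_two (hf : DifferentiableAt ℝ f x) (i : Fin n) :
    pd n (fun y ↦ f y ^ 2) i x = 2 * f x * pd n f i x := by
  simp [pd, fderiv_fun_pow 2 hf]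

theorem pd_sum {ι : Type*} {s : Finset ι} {F : ι → EuclideanSpace ℝ (Fin n) → ℝ}
    (hF : ∀ j ∈ s, DifferentiableAt ℝ (F j) x) (i : Fin n) :
    pd n (fun y ↦ ∑ j ∈ s, F j y) i x = ∑ j ∈ s, pd n (F j) i x := by
  simp [pd, fderiv_fun_sum hF]

variable {F : Fin n → EuclideanSpace ℝ (Fin n) → ℝ}

theorem integrable_pd (hF : ∀ i, ContDiff ℝ 1 (F i)) (hs : ∀ i, HasCompactSupport (F i))
    (i j : Fin n) : Integrable (pd n (F i) j) :=
  (hF i).integrable_fderiv_apply volume (hs i) _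

theorem integral_sum_pd_eq_zero (hF : ∀ i, ContDiff ℝ 1 (F i))
    (hs : ∀ i, HasCompactSupport (F i)) : ∫ x, ∑ i, pd n (F i) i x = 0 := by
  rw [integral_finsetSum _ fun i _ ↦ integrable_pd hF hs i i]
  exact Finset.sum_eq_zero fun i _ ↦ integral_fderiv_apply_eq_zero volume (hF i) (hs i) _

end PartialDerivatives

theorem Finset.sum_sum_eq_of_add_swap_eq {ι M : Type*} [AddCommMonoid M] [IsAddTorsionFree M]
    (s : Finset ι) (L R : ι → ι → M) (h : ∀ i j, L i j + L j i = R i j + R j i) :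
    ∑ i ∈ s, ∑ j ∈ s, L i j = ∑ i ∈ s, ∑ j ∈ s, R i j := by
  have two_nsmul_sum (A : ι → ι → M) :
      ∑ i ∈ s, ∑ j ∈ s, (A i j + A j i) = 2 • ∑ i ∈ s, ∑ j ∈ s, A i j := by
    simp only [Finset.sum_add_distrib, Finset.sum_comm (f := fun i j ↦ A j i), two_nsmul]
  apply IsAddTorsionFree.nsmul_right_injective two_ne_zero
  simp only [← two_nsmul_sum, h]

section Flux

variable {n : ℕ} (Y V : EuclideanSpace ℝ (Fin n) → EuclideanSpace ℝ (Fin n))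

noncomputable def killingFlux (i : Fin n) (x : EuclideanSpace ℝ (Fin n)) : ℝ :=
  1/2 * (Y x i * ∑ j, Y x j * V x j) + 1/4 * ((∑ j, Y x j ^ 2) * V x i)

theorem vpd_eq_pd (i j : Fin n) (x : EuclideanSpace ℝ (Fin n)) :
    vpd n Y i j x = pd n (fun y ↦ Y y j) i x := rfl

variable {Y V}

@[fun_prop]
theorem continuous_vpd (hV : ContDiff ℝ 1 V) (i j : Fin n) : Continuous (vpd n V i j) :=
  ((show ContDiff ℝ 1 (fun y ↦ V y j) by fun_prop).continuous_fderiv one_ne_zero).clm_apply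
    continuous_const

theorem pd_killingFlux (hY : Differentiable ℝ Y) (hV : Differentiable ℝ V) (i : Fin n)
    (x : EuclideanSpace ℝ (Fin n)) :
    pd n (killingFlux Y V i) i x =
      1/2 * (vpd n Y i i x * ∑ j, Y x j * V x j
          + Y x i * ∑ j, (vpd n Y i j x * V x j + Y x j * vpd n V i j x))
        + 1/4 * ((∑ j, 2 * Y x j * vpd n Y i j x) * V x i
          + (∑ j, Y x j ^ 2) * vpd n V i i x) := by
  unfold killingFlux
  simp (disch := first | fun_prop | intros; fun_prop) only
    [pd_add, pd_const_mul, pd_mul, pd_sum, pd_pow_two, vpd_eq_pd]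

theorem contDiff_killingFlux (hY : ContDiff ℝ 1 Y) (hV : ContDiff ℝ 1 V) (i : Fin n) :
    ContDiff ℝ 1 (killingFlux Y V i) := by
  unfold killingFlux
  fun_prop

theorem hasCompactSupport_killingFlux (hY : HasCompactSupport Y) (i : Fin n) :
    HasCompactSupport (killingFlux Y V i) :=
  hY.mono fun x hx hYx ↦ hx (by simp [killingFlux, hYx])

theorem sum_pd_killingFlux (hY : Differentiable ℝ Y) (hV : Differentiable ℝ V)
    (x : EuclideanSpace ℝ (Fin n)) :
    ∑ i, pd n (killingFlux Y V i) i x =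
      ∑ i, ∑ j, (symGrad n Y i j x + 1/2 * diverg n Y x * (if i = j then 1 else 0))
          * Y x i * V x j
        + 1/2 * ((∑ i, ∑ j, Y x i * Y x j * vpd n V i j x)
          + 1/2 * diverg n V x * ∑ i, Y x i ^ 2) := by
  simp only [pd_killingFlux hY hV, symGrad, diverg, mul_ite, mul_one, mul_zero, ite_mul,
    zero_mul, add_mul, mul_add, Finset.sum_add_distrib, Finset.sum_ite_eq, Finset.mem_univ,
    if_true, Finset.mul_sum, Finset.sum_mul]
  simp only [← Finset.sum_add_distrib]
  exact Finset.sum_sum_eq_of_add_swap_eq _ _ _ fun i j ↦ by ring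

end Flux

theorem killing_operator_identity_general (n : ℕ)
    (Y V : EuclideanSpace ℝ (Fin n) → EuclideanSpace ℝ (Fin n))
    (hY : ContDiff ℝ 1 Y) (hV : ContDiff ℝ 1 V) (hsupp : HasCompactSupport Y) :
    ∫ x : EuclideanSpace ℝ (Fin n),
        ∑ i, ∑ j, (symGrad n Y i j x +
            (1/2) * diverg n Y x * (if i = j then (1:ℝ) else 0)) * Y x i * V x j
      = -(1/2) * ∫ x : EuclideanSpace ℝ (Fin n),
          ((∑ i, ∑ j, Y x i * Y x j * vpd n V i j x) +
            (1/2) * diverg n V x * (∑ i, (Y x i) ^ 2)) := by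
  set B := fun x ↦ (∑ i, ∑ j, Y x i * Y x j * vpd n V i j x) +
    (1/2) * diverg n V x * (∑ i, (Y x i) ^ 2)
  have hB : Integrable B :=
    (by unfold B diverg; fun_prop : Continuous B).integrable_of_hasCompactSupport
      (hsupp.mono fun x hx hYx ↦ hx (by simp [B, hYx]))
  have hdiv : Integrable fun x ↦ ∑ i, pd n (killingFlux Y V i) i x :=
    integrable_finsetSum _ fun i _ ↦
      integrable_pd (contDiff_killingFlux hY hV) (hasCompactSupport_killingFlux hsupp) i i
  calc _ = ∫ x, (∑ i, pd n (killingFlux Y V i) i x - 1/2 * B x) := by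
        congr with x
        rw [sum_pd_killingFlux (hY.differentiable one_ne_zero) (hV.differentiable one_ne_zero)]
        ring
    _ = -(1/2) * ∫ x, B x := by
        rw [integral_sub hdiv (hB.const_mul _), integral_const_mul,
          integral_sum_pd_eq_zero (contDiff_killingFlux hY hV)
            (hasCompactSupport_killingFlux hsupp)]
        ring

/-- Flat-case integration-by-parts identity for the Killing operator:
`∫ Σᵢⱼ (S(Y)ᵢⱼ + ½(div Y)δᵢⱼ) Yᵢ Vⱼ = −½ ∫ (ΣᵢⱼYᵢYⱼ∂ᵢVⱼ + ½(div V)|Y|²)`. -/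
theorem killing_operator_identity (n : ℕ) (hn : 1 ≤ n)
    (Y V : EuclideanSpace ℝ (Fin n) → EuclideanSpace ℝ (Fin n))
    (hY : ContDiff ℝ 1 Y) (hV : ContDiff ℝ 1 V) (hsupp : HasCompactSupport Y) :
    ∫ x : EuclideanSpace ℝ (Fin n),
        ∑ i, ∑ j, (symGrad n Y i j x +
            (1/2) * diverg n Y x * (if i = j then (1:ℝ) else 0)) * Y x i * V x j
      = -(1/2) * ∫ x : EuclideanSpace ℝ (Fin n),
          ((∑ i, ∑ j, Y x i * Y x j * vpd n V i j x) +
            (1/2) * diverg n V x * (∑ i, (Y x i) ^ 2)) :=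
  killing_operator_identity_general n Y V hY hV hsupp
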